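/- Let Δ ∈ [0, π/2], s ∈ {−1, 1}, and β, φ ∈ ℝ with s·∠(φ − β) ∈ [0, Δ). Then cos((β + sΔ) − β) ≤ cos Δ (so θ = β + sΔ is feasible), and for every θ ∈ ℝ with cos(θ − β) ≤ cos Δ one has cos(θ − φ) ≤ cos((β + sΔ) − φ); that is, θ = β + sΔ maximizes cos(θ − φ) over the feasible set {θ : cos(θ − β) ≤ cos Δ}. -/

import Mathlib

/-!
Write `ψ = ∠(φ - β)`, so `|ψ| = sψ < Δ`, and reduce `θ - φ` to `a = ∠(θ - φ) ∈ [-π, π)`.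
Since `a + ψ ≡ θ - β`, a feasible `θ` has `|a + ψ| ≥ Δ` (cosine is strictly decreasing on
`[0, π]` and `Δ ≤ π`), hence `|a| ≥ Δ - |ψ| ≥ 0`, and so `cos (θ - φ) = cos |a| ≤ cos (Δ - |ψ|)`,
which is `cos ((β + sΔ) - φ)`.
-/

open Real

/-- Angular normalization: maps `a` to the unique value in `[-π, π)` congruent to `a` mod `2π`. -/
noncomputable def angNorm (a : ℝ) : ℝ :=
  2 * π * Int.fract ((a + π) / (2 * π)) - π

theorem exists_angNorm_eq_add_int_mul_two_pi (a : ℝ) :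
    ∃ k : ℤ, angNorm a = a + k * (2 * π) := by
  refine ⟨-⌊(a + π) / (2 * π)⌋, ?_⟩
  rw [angNorm, Int.fract]
  push_cast
  field_simp
  ring

theorem angNorm_mem_Ico (a : ℝ) : angNorm a ∈ Set.Ico (-π) π := by
  have h0 := Int.fract_nonneg ((a + π) / (2 * π))
  have h1 := Int.fract_lt_one ((a + π) / (2 * π))
  constructor <;> unfold angNorm <;> nlinarith [pi_pos]

theorem abs_angNorm_le_pi (a : ℝ) : |angNorm a| ≤ π :=
  abs_le.2 ⟨(angNorm_mem_Ico a).1, (angNorm_mem_Ico a).2.le⟩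

theorem cos_angNorm_add (x y : ℝ) : cos (angNorm x + y) = cos (x + y) := by
  obtain ⟨k, hk⟩ := exists_angNorm_eq_add_int_mul_two_pi x
  rw [hk, add_right_comm, cos_add_int_mul_two_pi]

theorem cos_sub_angNorm (x y : ℝ) : cos (x - angNorm y) = cos (x - y) := by
  obtain ⟨k, hk⟩ := exists_angNorm_eq_add_int_mul_two_pi y
  rw [hk, ← sub_sub, cos_sub_int_mul_two_pi]

theorem cos_angNorm (x : ℝ) : cos (angNorm x) = cos x := by
  simpa using cos_angNorm_add x 0

theorem cos_mul_of_eq_neg_one_or_eq_one {s : ℝ} (hs : s = -1 ∨ s = 1) (x : ℝ) :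
    cos (s * x) = cos x := by
  rcases hs with rfl | rfl <;> simp

theorem cos_le_cos_sub_abs_of_cos_add_le {x y δ : ℝ} (hδ : δ ≤ π) (hy : |y| ≤ δ)
    (h : cos (x + y) ≤ cos δ) : cos x ≤ cos (δ - |y|) := by
  set a := angNorm x
  have hfar : δ - |y| ≤ |a| := by
    by_contra! hnear
    have hsum : |a + y| < δ := (abs_add_le a y).trans_lt (by linarith)
    have hlt := cos_lt_cos_of_nonneg_of_le_pi (abs_nonneg _) hδ hsum
    rw [cos_abs, cos_angNorm_add] at hlt
    linarith
  calc cos x = cos |a| := by rw [cos_abs, cos_angNorm]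
    _ ≤ cos (δ - |y|) :=
      cos_le_cos_of_nonneg_of_le_pi (by linarith) (abs_angNorm_le_pi x) hfar

/-- when the cruising angle `φ` lies in the unsafe cone on side `s` of the
bearing angle `β`, the heading `β + sΔ` is feasible and maximizes `cos (θ − φ)` over the
feasible set `{θ : cos (θ − β) ≤ cos Δ}`. -/
theorem boundary_heading_is_optimal
    (Δ : ℝ) (hΔ : Δ ∈ Set.Icc 0 (π / 2)) (s : ℝ) (hs : s = -1 ∨ s = 1)
    (β φ : ℝ) (hφ : s * angNorm (φ - β) ∈ Set.Ico 0 Δ) :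
    cos ((β + s * Δ) - β) ≤ cos Δ ∧
      ∀ θ : ℝ, cos (θ - β) ≤ cos Δ → cos (θ - φ) ≤ cos ((β + s * Δ) - φ) := by
  set ψ := angNorm (φ - β)
  have habs_s : |s| = 1 := by rcases hs with rfl | rfl <;> simp
  have habs_ψ : |ψ| = s * ψ := by
    rw [← abs_of_nonneg hφ.1, abs_mul, habs_s, one_mul]
  have hboundary : cos ((β + s * Δ) - φ) = cos (Δ - |ψ|) := by
    have hs2 : s * s = 1 := by rcases hs with rfl | rfl <;> norm_num
    rw [show (β + s * Δ) - φ = s * Δ - (φ - β) by ring, ← cos_sub_angNorm, habs_ψ,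
      ← cos_mul_of_eq_neg_one_or_eq_one hs (Δ - s * ψ), mul_sub, ← mul_assoc, hs2, one_mul]
  refine ⟨by rw [add_sub_cancel_left, cos_mul_of_eq_neg_one_or_eq_one hs], fun θ hθ => ?_⟩
  rw [hboundary]
  refine cos_le_cos_sub_abs_of_cos_add_le (by linarith [hΔ.2, pi_pos]) (habs_ψ ▸ hφ.2.le) ?_
  rwa [add_comm, cos_angNorm_add, add_comm, sub_add_sub_cancel]
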